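/- If k[G] is a left noetherian group algebra over a field k, then the group G is finitely generated. -/

import Mathlib

open MonoidAlgebra Finsupp

section aux
variable {k G : Type*} [Field k] [Group G]

/-- The left ideal generated by `h - 1`, `h ∈ H`. -/
noncomputable def augIdeal (H : Subgroup G) : Ideal (MonoidAlgebra k G) :=
  Ideal.span ((fun g => MonoidAlgebra.single g (1 : k) - 1) '' (H : Set G))

noncomputable def phi (H : Subgroup G) : MonoidAlgebra k G →ₗ[k] (G ⧸ H →₀ k) :=
  Finsupp.lmapDomain k k (QuotientGroup.mk : G → G ⧸ H) ∘ₗ (MonoidAlgebra.coeffLinearEquiv k).toLinearMap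

lemma phi_apply (H : Subgroup G) (x : MonoidAlgebra k G) :
    phi H x = Finsupp.mapDomain (QuotientGroup.mk : G → G ⧸ H) x.coeff := rfl

lemma single_mul_eq (a : G) (b : k) (x : MonoidAlgebra k G) :
    MonoidAlgebra.single a b * x = MonoidAlgebra.ofCoeff (Finsupp.mapDomain (fun g => a * g) (b • x.coeff)) := by
  ext y
  rw [MonoidAlgebra.coeff_single_mul_apply, MonoidAlgebra.coeff_ofCoeff]
  have : y = a * (a⁻¹ * y) := by group
  rw [this, Finsupp.mapDomain_apply (mul_right_injective a)]
  rw [Finsupp.smul_apply, smul_eq_mul]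
  group

lemma phi_mul (H : Subgroup G) (r x : MonoidAlgebra k G) (hx : phi H x = 0) :
    phi H (r * x) = 0 := by
  induction r using MonoidAlgebra.induction with
  | zero => simp
  | single_add a b f _ _ ih =>
    rw [add_mul, map_add, ih, add_zero, single_mul_eq]
    show Finsupp.mapDomain _ (Finsupp.mapDomain (fun g => a * g) (b • x.coeff)) = 0
    rw [← Finsupp.mapDomain_comp]
    have hc : (QuotientGroup.mk : G → G ⧸ H) ∘ (fun g => a * g)
        = (fun q : G ⧸ H => a • q) ∘ (QuotientGroup.mk : G → G ⧸ H) := by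
      funext g; simp [MulAction.Quotient.smul_mk]
    rw [hc, Finsupp.mapDomain_comp, Finsupp.mapDomain_smul]
    have : Finsupp.mapDomain (QuotientGroup.mk : G → G ⧸ H) x.coeff = 0 := hx
    rw [this, smul_zero, Finsupp.mapDomain_zero]

lemma phi_eq_zero_of_mem (H : Subgroup G) {x : MonoidAlgebra k G} (hx : x ∈ augIdeal (k := k) H) :
    phi H x = 0 := by
  refine Submodule.span_induction ?_ (by simp) (fun a b _ _ ha hb => by
    rw [map_add, ha, hb, add_zero]) (fun r a _ ha => phi_mul H r a ha) hx
  rintro _ ⟨g, hg, rfl⟩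
  have h1 : (QuotientGroup.mk g : G ⧸ H) = QuotientGroup.mk 1 := by
    rw [QuotientGroup.eq]; simpa using hg
  rw [map_sub, phi_apply, phi_apply, MonoidAlgebra.one_def, MonoidAlgebra.coeff_single, MonoidAlgebra.coeff_single, Finsupp.mapDomain_single,
    Finsupp.mapDomain_single, h1, sub_self]

lemma mem_of_sub_one_mem (H : Subgroup G) {g : G}
    (hg : MonoidAlgebra.single g (1 : k) - 1 ∈ augIdeal (k := k) H) : g ∈ H := by
  have := phi_eq_zero_of_mem H hg
  rw [map_sub, sub_eq_zero, phi_apply, phi_apply, MonoidAlgebra.one_def, MonoidAlgebra.coeff_single, MonoidAlgebra.coeff_single,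
    Finsupp.mapDomain_single, Finsupp.mapDomain_single] at this
  have hgq : (QuotientGroup.mk g : G ⧸ H) = QuotientGroup.mk 1 :=
    (Finsupp.single_left_inj one_ne_zero).mp this
  rw [QuotientGroup.eq] at hgq; simpa using hgq

lemma mem_augIdeal_of_support (H : Subgroup G) (x : MonoidAlgebra k G)
    (hsupp : ∀ g ∈ x.coeff.support, g ∈ H) (hsum : ∑ g ∈ x.coeff.support, x.coeff g = 0) :
    x ∈ augIdeal (k := k) H := by
  have hx : x = ∑ g ∈ x.coeff.support, x.coeff g • (MonoidAlgebra.single g (1 : k) - 1) := by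
    simp only [smul_sub, Finset.sum_sub_distrib, ← Finset.sum_smul, hsum, zero_smul, sub_zero]
    conv_lhs => rw [← MonoidAlgebra.sum_coeff_single x]
    rw [Finsupp.sum]
    congr 1
    ext g y
    simp [MonoidAlgebra.smul_single']
  rw [hx]
  refine Submodule.sum_mem _ fun g hg => Submodule.smul_of_tower_mem _ _ ?_
  exact Ideal.subset_span ⟨g, hsupp g hg, rfl⟩
end aux

/-- If the group algebra `k[G]` over a field `k` is left noetherian, then `G` is
finitely generated. -/
theorem stmt1 (k G : Type*) [Field k] [Group G]
    (h : IsNoetherianRing (MonoidAlgebra k G)) : Group.FG G := by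
  classical
  set I : Ideal (MonoidAlgebra k G) :=
    Ideal.span ((fun g => MonoidAlgebra.single g (1 : k) - 1) '' Set.univ) with hI
  obtain ⟨T, hT⟩ := (isNoetherianRing_iff_ideal_fg _).mp h I
  set S : Finset G := T.sup fun t => t.coeff.support with hS
  set H : Subgroup G := Subgroup.closure (S : Set G) with hH
  -- the augmentation of any element of I is zero
  have haug : ∀ x ∈ I, ∑ g ∈ x.coeff.support, x.coeff g = 0 := by
    intro x hx
    let ε : MonoidAlgebra k G →ₐ[k] k := MonoidAlgebra.lift k k G 1
    have hεx : ε x = 0 := by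
      have hle : I ≤ RingHom.ker (ε : MonoidAlgebra k G →+* k) := by
        rw [hI, Ideal.span_le]
        rintro _ ⟨g, -, rfl⟩
        simp [RingHom.mem_ker, ε]
      exact hle hx
    have : ε x = ∑ g ∈ x.coeff.support, x.coeff g := by
      simp [ε, MonoidAlgebra.lift_apply, Finsupp.sum]
    rwa [this] at hεx
  have hIH : I ≤ augIdeal (k := k) H := by
    rw [← hT, Ideal.span_le]
    intro t ht
    refine mem_augIdeal_of_support H t (fun g hg => ?_) (haug t (hT ▸ Ideal.subset_span ht))
    exact Subgroup.subset_closure (by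
      simp only [Finset.mem_coe, hS]
      exact Finset.mem_sup.mpr ⟨t, ht, hg⟩)
  have htop : ∀ g : G, g ∈ H := by
    intro g
    exact mem_of_sub_one_mem H (hIH (Ideal.subset_span ⟨g, Set.mem_univ g, rfl⟩))
  rw [Group.fg_iff]
  exact ⟨(S : Set G), by rw [← hH, eq_top_iff]; exact fun g _ => htop g, S.finite_toSet⟩
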